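/- Let n ≥ 2, let g ∈ SL_n(ℂ) satisfy (g^{-1} f g)_{i,j} = 0 for all j > i+1, and let i ∈ [n-1]. Then it is not the case that both Δ_i(g) = 0 and (g^{-1} f g)_{i,i+1} = 0. -/

import Mathlib

/-
Write `X = g⁻¹ f g` and split the coordinates after position `i`. If `X_{i,i+1} = 0`, the
Hessenberg condition makes `X` block lower triangular, so `X` preserves the span `V` of the
last `n - i` basis vectors, and `X` is nilpotent, so `X ^ (n - i)` kills `V`. Since
`g X ^ (n - i) = f ^ (n - i) g`, the shift `f ^ (n - i)` kills `g V`, i.e.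
`g V ⊆ ker f ^ (n - i) = V`. Hence `g` is block lower triangular as well and `det g` is the
product of its top-left minor with `Δ_i(g)`, which cannot vanish when `det g = 1`.
-/

open Matrix

attribute [local instance] Classical.propDecidable

noncomputable section

namespace PetersonPaper

/-- Zero above the diagonal: `M i j = 0` whenever `i < j` (lower triangular). -/
def lowerTri (n : ℕ) (M : Matrix (Fin n) (Fin n) ℂ) : Prop :=
  ∀ i j : Fin n, i < j → M i j = 0

/-- Zero below the diagonal: `M i j = 0` whenever `j < i` (upper triangular). -/
def upperTri (n : ℕ) (M : Matrix (Fin n) (Fin n) ℂ) : Prop :=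
  ∀ i j : Fin n, j < i → M i j = 0

/-- The regular nilpotent matrix `f`, with `(i,j)` entry `1` iff `i = j+1`. -/
def fMat (n : ℕ) : Matrix (Fin n) (Fin n) ℂ :=
  fun i j => if (i : ℕ) = (j : ℕ) + 1 then 1 else 0

/-- `Δ_i(g)`: the lower-right `(n-i)×(n-i)` minor of `g`.  Here `i : Fin (n-1)`
encodes the (1-based) index `i.1 + 1 ∈ {1,…,n-1}`. -/
def Delta (n : ℕ) (g : Matrix (Fin n) (Fin n) ℂ) (i : Fin (n-1)) : ℂ :=
  (g.submatrix
    (fun k : Fin (n - (i.1 + 1)) => (⟨k.1 + (i.1 + 1), by have := k.isLt; omega⟩ : Fin n))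
    (fun k : Fin (n - (i.1 + 1)) => (⟨k.1 + (i.1 + 1), by have := k.isLt; omega⟩ : Fin n))).det

/-- `q_i(g) = -(g⁻¹ f g)_{i,i+1}` (1-based indices; `i : Fin (n-1)` encodes `i.1+1`). -/
def qfun (n : ℕ) (g : Matrix (Fin n) (Fin n) ℂ) (i : Fin (n-1)) : ℂ :=
  -((g⁻¹ * fMat n * g) (⟨i.1, by have := i.isLt; omega⟩ : Fin n)
      (⟨i.1 + 1, by have := i.isLt; omega⟩ : Fin n))

/-- The (0-based) gap `c` (between positions `c` and `c+1` of `Fin n`) belongs to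
`J ⊆ [n-1]`; `c` encodes the 1-based element `c+1` of `[n-1]`. -/
def gapMem (n : ℕ) (J : Set (Fin (n-1))) (c : ℕ) : Prop :=
  ∃ h : c < n - 1, (⟨c, h⟩ : Fin (n-1)) ∈ J

/-- The (0-based) first position of the block of the partition of `{0,…,n-1}`
determined by `J` containing the position `p`. -/
def blockStart (n : ℕ) (J : Set (Fin (n-1))) (p : Fin n) : ℕ :=
  sInf {a : ℕ | a ≤ p.1 ∧ ∀ c : ℕ, a ≤ c → c < p.1 → gapMem n J c}

/-- The (0-based) last position of the block of the partition of `{0,…,n-1}`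
determined by `J` containing the position `p`. -/
def blockEnd (n : ℕ) (J : Set (Fin (n-1))) (p : Fin n) : ℕ :=
  sSup {b : ℕ | b < n ∧ p.1 ≤ b ∧ ∀ c : ℕ, p.1 ≤ c → c < b → gapMem n J c}

lemma blockStart_le (n : ℕ) (J : Set (Fin (n-1))) (p : Fin n) : blockStart n J p ≤ p.1 :=
  Nat.sInf_le ⟨le_refl _, fun c hc1 hc2 => absurd (lt_of_le_of_lt hc1 hc2) (lt_irrefl _)⟩

lemma blockEnd_mem (n : ℕ) (J : Set (Fin (n-1))) (p : Fin n) :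
    blockEnd n J p ∈ {b : ℕ | b < n ∧ p.1 ≤ b ∧ ∀ c : ℕ, p.1 ≤ c → c < b → gapMem n J c} :=
  Nat.sSup_mem
    ⟨p.1, p.isLt, le_refl _, fun c hc1 hc2 => absurd (lt_of_le_of_lt hc1 hc2) (lt_irrefl _)⟩
    ⟨n, fun _ hb => le_of_lt hb.1⟩

lemma blockEnd_lt (n : ℕ) (J : Set (Fin (n-1))) (p : Fin n) : blockEnd n J p < n :=
  (blockEnd_mem n J p).1

lemma le_blockEnd (n : ℕ) (J : Set (Fin (n-1))) (p : Fin n) : p.1 ≤ blockEnd n J p :=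
  (blockEnd_mem n J p).2.1

/-- The representative `ẇ_J` of the longest element of the Young subgroup determined
by `J ⊆ [n-1]`: block diagonal, with the antidiagonal matrix with entries
`(-1)^(row - blockStart)` on each block of the partition determined by `J`. -/
def wJ (n : ℕ) (J : Set (Fin (n-1))) : Matrix (Fin n) (Fin n) ℂ :=
  fun p q =>
    if (p : ℕ) + (q : ℕ) = blockStart n J p + blockEnd n J p
    then (-1 : ℂ) ^ ((p : ℕ) - blockStart n J p) else 0

/-- A `J`-Toeplitz matrix: block diagonal with respect to the partition determined by
`J`, each block being lower triangular Toeplitz with `1`'s on the diagonal. -/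
def IsJToeplitz (n : ℕ) (J : Set (Fin (n-1))) (x : Matrix (Fin n) (Fin n) ℂ) : Prop :=
  ∃ c : ℕ → ℕ → ℂ, (∀ a, c a 0 = 1) ∧
    ∀ p q : Fin n, x p q =
      if blockStart n J p = blockStart n J q ∧ (q : ℕ) ≤ (p : ℕ)
      then c (blockStart n J p) ((p : ℕ) - (q : ℕ)) else 0

/-- `g ∈ B⁺ ẇ_K B⁻` (at the level of matrices of determinant 1). -/
def inBruhatPlus (n : ℕ) (K : Set (Fin (n-1))) (g : Matrix (Fin n) (Fin n) ℂ) : Prop :=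
  ∃ b₁ b₂ : Matrix (Fin n) (Fin n) ℂ,
    b₁.det = 1 ∧ b₂.det = 1 ∧ upperTri n b₁ ∧ lowerTri n b₂ ∧ g = b₁ * wJ n K * b₂

/-- `g ∈ B⁻ ẇ_J B⁻` (at the level of matrices of determinant 1). -/
def inBruhatMinus (n : ℕ) (J : Set (Fin (n-1))) (g : Matrix (Fin n) (Fin n) ℂ) : Prop :=
  ∃ b₁ b₂ : Matrix (Fin n) (Fin n) ℂ,
    b₁.det = 1 ∧ b₂.det = 1 ∧ lowerTri n b₁ ∧ lowerTri n b₂ ∧ g = b₁ * wJ n J * b₂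

end PetersonPaper

namespace Matrix

variable {R ι : Type*} {M : Matrix ι ι R} {p : ι → Prop}

theorem blockTriangular_prop_iff [Zero R] :
    M.BlockTriangular p ↔ ∀ i, p i → ∀ j, ¬p j → M i j = 0 := by
  simp only [BlockTriangular, lt_iff_le_not_ge, le_Prop_eq]
  grind

theorem BlockTriangular.toBlock_eq_zero [Zero R] (hM : M.BlockTriangular p) :
    M.toBlock p (fun j => ¬p j) = 0 := by
  ext i j
  exact blockTriangular_prop_iff.mp hM i i.2 j j.2

variable [CommRing R] [Fintype ι] [DecidableEq ι]

theorem BlockTriangular.toSquareBlockProp_pow [DecidablePred p] (hM : M.BlockTriangular p)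
    (k : ℕ) : (M ^ k).toSquareBlockProp (fun i => ¬p i)
      = M.toSquareBlockProp (fun i => ¬p i) ^ k := by
  induction k with
  | zero => exact toBlock_one_self _
  | succ k ih =>
    rw [pow_succ, pow_succ, ← ih]
    simp only [toSquareBlockProp, toBlock_mul_eq_add (fun i => ¬p i) p, hM.toBlock_eq_zero,
      Matrix.mul_zero, zero_add]

theorem pow_card_eq_zero_of_isNilpotent [IsDomain R] (hM : IsNilpotent M) :
    M ^ Fintype.card ι = 0 := by
  have h := (isNilpotent_charpoly_sub_pow_of_isNilpotent hM).eq_zero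
  rw [sub_eq_zero] at h
  simpa [h] using M.aeval_self_charpoly

theorem BlockTriangular.pow_card_apply_eq_zero [IsDomain R] [DecidablePred p]
    (hM : M.BlockTriangular p) (hnil : IsNilpotent M) (i : ι) {j : ι} (hj : ¬p j) :
    (M ^ Fintype.card {j // ¬p j}) i j = 0 := by
  by_cases hi : p i
  · exact blockTriangular_prop_iff.mp (hM.pow _) i hi j hj
  · obtain ⟨N, hN⟩ := hnil
    have hblock : IsNilpotent (M.toSquareBlockProp fun i => ¬p i) :=
      ⟨N, by rw [← hM.toSquareBlockProp_pow, hN]; rfl⟩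
    have := congrFun₂ (pow_card_eq_zero_of_isNilpotent hblock) ⟨i, hi⟩ ⟨j, hj⟩
    rwa [← hM.toSquareBlockProp_pow] at this

end Matrix

theorem SemiconjBy.isNilpotent_of_isUnit {M : Type*} [MonoidWithZero M] {a x y : M}
    (h : SemiconjBy a x y) (ha : IsUnit a) (hy : IsNilpotent y) : IsNilpotent x := by
  obtain ⟨u, rfl⟩ := ha
  obtain ⟨m, hm⟩ := hy
  refine ⟨m, u.mul_right_eq_zero.mp ?_⟩
  rw [(h.pow_right m).eq, hm, zero_mul]

namespace PetersonPaper

lemma fMat_pow_apply (n m : ℕ) (a b : Fin n) :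
    (fMat n ^ m) a b = if (a : ℕ) = b + m then 1 else 0 := by
  induction m generalizing a with
  | zero => simp [one_apply, Fin.ext_iff]
  | succ m ih =>
    rw [pow_succ', mul_apply]
    simp only [ih, fMat, mul_ite, mul_one, mul_zero, ← ite_and]
    by_cases ha : (a : ℕ) = b + (m + 1)
    · rw [if_pos ha, Finset.sum_eq_single ⟨b + m, by omega⟩ (fun j _ hj => if_neg ?_) (by simp),
        if_pos ⟨rfl, by omega⟩]
      exact fun h => hj (Fin.ext h.1)
    · rw [if_neg ha]
      exact Finset.sum_eq_zero fun j _ => if_neg (by omega)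

lemma fMat_pow_mul_apply_add {n m : ℕ} (A : Matrix (Fin n) (Fin n) ℂ) (c b : Fin n)
    (h : (c : ℕ) + m < n) : (fMat n ^ m * A) ⟨c + m, h⟩ b = A c b := by
  simp [mul_apply, fMat_pow_apply, Fin.val_inj]

lemma fMat_pow_self (n : ℕ) : fMat n ^ n = 0 := by
  ext a b
  rw [fMat_pow_apply, if_neg (by omega), Matrix.zero_apply]

def finTailEquiv (n k : ℕ) : Fin (n - k) ≃ {a : Fin n // ¬(a : ℕ) < k} where
  toFun j := ⟨⟨j + k, by omega⟩, by simp⟩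
  invFun a := ⟨a.1 - k, by omega⟩
  left_inv j := by ext; simp
  right_inv a := by ext; simp; omega

lemma Delta_eq_det_toSquareBlockProp (n : ℕ) (g : Matrix (Fin n) (Fin n) ℂ) (i : Fin (n - 1)) :
    Delta n g i = (g.toSquareBlockProp fun a => ¬(a : ℕ) < i + 1).det :=
  det_submatrix_equiv_self (finTailEquiv n (i + 1)) (g.toSquareBlockProp _)

lemma blockTriangular_of_hessenberg {n : ℕ} {X : Matrix (Fin n) (Fin n) ℂ}
    (hX : ∀ a b : Fin n, (a : ℕ) + 1 < b → X a b = 0) {i : ℕ} (hi : i + 1 < n)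
    (hq : X ⟨i, Nat.lt_of_succ_lt hi⟩ ⟨i + 1, hi⟩ = 0) :
    X.BlockTriangular fun a => (a : ℕ) < i + 1 := by
  refine blockTriangular_prop_iff.mpr fun a ha b hb => ?_
  rcases lt_or_eq_of_le (show (a : ℕ) + 1 ≤ b by omega) with hab | hab
  · exact hX a b hab
  · have ha' : a = ⟨i, Nat.lt_of_succ_lt hi⟩ := Fin.ext (show (a : ℕ) = i by omega)
    have hb' : b = ⟨i + 1, hi⟩ := Fin.ext (show (b : ℕ) = i + 1 by omega)
    rwa [ha', hb']

lemma blockTriangular_of_semiconjBy_fMat {n k : ℕ} {g X : Matrix (Fin n) (Fin n) ℂ}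
    (hgX : SemiconjBy g X (fMat n)) (hX : X.BlockTriangular fun a => (a : ℕ) < k)
    (hnil : IsNilpotent X) : g.BlockTriangular fun a => (a : ℕ) < k := by
  rw [blockTriangular_prop_iff]
  intro c hc b hb
  set N := Fintype.card {a : Fin n // ¬(a : ℕ) < k}
  have hN : N = n - k := by simp [N, ← Fintype.card_congr (finTailEquiv n k)]
  calc g c b = (fMat n ^ N * g) ⟨c + N, by omega⟩ b := (fMat_pow_mul_apply_add g c b _).symm
    _ = (g * X ^ N) ⟨c + N, by omega⟩ b := by rw [(hgX.pow_right N).eq]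
    _ = 0 := by
      rw [mul_apply]
      exact Finset.sum_eq_zero fun d _ => by rw [hX.pow_card_apply_eq_zero hnil d hb, mul_zero]

/-- Proposition: for `g ∈ SL_n(ℂ)` satisfying the Peterson condition, `Δ_i(g)` and
`(g⁻¹ f g)_{i,i+1}` are not both zero. -/
theorem Delta_q_not_both_zero (n : ℕ)
    (g : Matrix (Fin n) (Fin n) ℂ) (hdet : g.det = 1)
    (hPet : ∀ i j : Fin n, (i : ℕ) + 1 < (j : ℕ) → (g⁻¹ * fMat n * g) i j = 0)
    (i : Fin (n-1)) :
    ¬(Delta n g i = 0 ∧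
      (g⁻¹ * fMat n * g) (⟨i.1, by have := i.isLt; omega⟩ : Fin n)
        (⟨i.1 + 1, by have := i.isLt; omega⟩ : Fin n) = 0) := by
  rintro ⟨hDelta, hq⟩
  have hunit : IsUnit g.det := hdet ▸ isUnit_one
  have hgX : SemiconjBy g (g⁻¹ * fMat n * g) (fMat n) := by
    simp only [SemiconjBy, ← Matrix.mul_assoc, mul_nonsing_inv g hunit, Matrix.one_mul]
  have hnil : IsNilpotent (g⁻¹ * fMat n * g) :=
    hgX.isNilpotent_of_isUnit ((isUnit_iff_isUnit_det g).mpr hunit) ⟨n, fMat_pow_self n⟩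
  have hX := blockTriangular_of_hessenberg hPet (by have := i.isLt; omega) hq
  have hdet_split := twoBlockTriangular_det' g _
    (blockTriangular_prop_iff.mp (blockTriangular_of_semiconjBy_fMat hgX hX hnil))
  rw [hdet, ← Delta_eq_det_toSquareBlockProp, hDelta, mul_zero] at hdet_split
  exact one_ne_zero hdet_split

end PetersonPaper
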